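/- Let k ≥ 2 and a ≥ 1 be integers, and let A be a generalized Cartan matrix of type N_{k,k+a}. Then every principal submatrix of A of dimension smaller than a+1 is of finite type, and every principal submatrix of A of hyperbolic (N_2) type has dimension at least a+2. -/

import Mathlib

/-- An `n × n` integer matrix is a generalized Cartan matrix (GCM). -/
def IsGCM {n : ℕ} (A : Matrix (Fin n) (Fin n) ℤ) : Prop :=
  (∀ i, A i i = 2) ∧ (∀ i j, i ≠ j → A i j ≤ 0) ∧ (∀ i j, A i j = 0 → A j i = 0)

/-- The graph on the index set of `A`, with an edge between `i ≠ j` whenever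
`A i j ≠ 0` (stated symmetrically so as to be well-defined for all matrices;
for a GCM, `A i j ≠ 0 ↔ A j i ≠ 0`). -/
def gcmGraph {n : ℕ} (A : Matrix (Fin n) (Fin n) ℤ) : SimpleGraph (Fin n) where
  Adj i j := i ≠ j ∧ (A i j ≠ 0 ∨ A j i ≠ 0)
  symm := ⟨fun i j h => ⟨h.1.symm, h.2.symm⟩⟩
  loopless := ⟨fun i h => h.1 rfl⟩

/-- A matrix is indecomposable (its diagram is connected). -/
def IsIndecomposable {n : ℕ} (A : Matrix (Fin n) (Fin n) ℤ) : Prop :=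
  (gcmGraph A).Connected

/-- An indecomposable GCM is of finite type: there is `u > 0` with `A ⬝ u > 0`. -/
def IsFinType {n : ℕ} (A : Matrix (Fin n) (Fin n) ℤ) : Prop :=
  IsGCM A ∧ IsIndecomposable A ∧
    ∃ u : Fin n → ℚ, (∀ i, 0 < u i) ∧ (∀ i, 0 < ∑ j, (A i j : ℚ) * u j)

/-- An indecomposable GCM is of affine type: there is `u > 0` with `A ⬝ u = 0`. -/
def IsAffType {n : ℕ} (A : Matrix (Fin n) (Fin n) ℤ) : Prop :=
  IsGCM A ∧ IsIndecomposable A ∧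
    ∃ u : Fin n → ℚ, (∀ i, 0 < u i) ∧ (∀ i, ∑ j, (A i j : ℚ) * u j = 0)

/-- An indecomposable GCM is of indefinite type: there is `u > 0` with `A ⬝ u < 0`. -/
def IsIndefType {n : ℕ} (A : Matrix (Fin n) (Fin n) ℤ) : Prop :=
  IsGCM A ∧ IsIndecomposable A ∧
    ∃ u : Fin n → ℚ, (∀ i, 0 < u i) ∧ (∀ i, ∑ j, (A i j : ℚ) * u j < 0)

/-- `B` is a principal submatrix of `A`: the restriction of `A` to a subset of
its index set (encoded by a strictly monotone map `Fin m → Fin n`). -/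
def IsPrincipalSubmatrix {m n : ℕ} (B : Matrix (Fin m) (Fin m) ℤ)
    (A : Matrix (Fin n) (Fin n) ℤ) : Prop :=
  ∃ f : Fin m → Fin n, StrictMono f ∧ B = A.submatrix f f

/-- A proper principal submatrix: the corresponding subset is nonempty and proper. -/
def IsProperPrincipalSubmatrix {m n : ℕ} (B : Matrix (Fin m) (Fin m) ℤ)
    (A : Matrix (Fin n) (Fin n) ℤ) : Prop :=
  IsPrincipalSubmatrix B A ∧ 0 < m ∧ m < n

/-- A GCM is of hyperbolic type: indecomposable, neither finite nor affine,
and every proper connected principal submatrix is of finite or affine type. -/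
def IsHypType {n : ℕ} (A : Matrix (Fin n) (Fin n) ℤ) : Prop :=
  IsGCM A ∧ IsIndecomposable A ∧ ¬ IsFinType A ∧ ¬ IsAffType A ∧
    ∀ m, ∀ B : Matrix (Fin m) (Fin m) ℤ,
      IsProperPrincipalSubmatrix B A → IsIndecomposable B →
        (IsFinType B ∨ IsAffType B)

/-- `N₀` = finite type, `N₁` = affine type, `N₂` = hyperbolic type; for `k ≥ 3`,
a GCM is of type `N_k` if it has a proper principal submatrix of type `N_{k-1}`
and every proper connected principal submatrix is of type `N_m` for some `m < k`. -/
def IsNType : (k : ℕ) → {n : ℕ} → Matrix (Fin n) (Fin n) ℤ → Prop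
  | 0, _, A => IsFinType A
  | 1, _, A => IsAffType A
  | 2, _, A => IsHypType A
  | (k+3), _, A => IsGCM A ∧ IsIndecomposable A ∧
      (∃ m, ∃ B : Matrix (Fin m) (Fin m) ℤ,
        IsProperPrincipalSubmatrix B A ∧ IsNType (k+2) B) ∧
      (∀ m, ∀ B : Matrix (Fin m) (Fin m) ℤ,
        IsProperPrincipalSubmatrix B A → IsIndecomposable B →
          ∃ m', ∃ _ : m' < k + 3, IsNType m' B)
  termination_by k => k

/-! An indecomposable GCM `D` with a vector `v > 0` such that `D v ≥ 0` and `D v ≠ 0` is of finite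
type: lowering `v` slightly at a vertex where `D v > 0` makes `D v` positive at its neighbours, and
connectedness lets this spread to every vertex. Restricting the positive vector of a finite or
affine matrix then shows that its connected proper principal submatrices are of finite type, so
passing to a connected proper principal submatrix lowers the index of an `N_j` matrix unless the
matrix is already finite. Any connected principal submatrix `B` of `A` is reached from `A` by
deleting one vertex at a time while staying connected, so if `A` is of type `N_{k,n}` and `B` has
dimension `m`, then `B` is of finite type or of type `N_j` with `j + (n - m) ≤ k`. For
`n = k + a`, this forces `j = 0` when `m ≤ a`, and `m ≥ a + j ≥ a + 2` when `B` is hyperbolic. -/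

open Finset Function

variable {m n : ℕ}

lemma SimpleGraph.Connected.exists_adj_of_mem_of_notMem {V : Type*} {G : SimpleGraph V}
    (hG : G.Connected) {S : Set V} {a b : V} (ha : a ∈ S) (hb : b ∉ S) :
    ∃ x ∈ S, ∃ y ∉ S, G.Adj x y := by
  obtain ⟨w⟩ := hG.preconnected a b
  obtain ⟨d, -, hd₁, hd₂⟩ := w.exists_boundary_dart S ha hb
  exact ⟨d.fst, hd₁, d.snd, hd₂, d.adj⟩

lemma SimpleGraph.Connected.induce_insert {V : Type*} {G : SimpleGraph V} {S : Set V}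
    (hS : (G.induce S).Connected) {x v : V} (hx : x ∈ S) (hxv : G.Adj x v) :
    (G.induce (insert v S)).Connected := by
  rw [← Set.union_singleton]
  exact SimpleGraph.connected_induce_union hS.preconnected
    SimpleGraph.Preconnected.of_subsingleton hx rfl hxv

lemma exists_notMem_range_of_lt (f : Fin m → Fin n) (hmn : m < n) : ∃ b, b ∉ Set.range f := by
  by_contra! h
  have := Fintype.card_le_of_surjective f h
  simp only [Fintype.card_fin] at this
  omega

section RowSums

variable {A : Matrix (Fin n) (Fin n) ℤ}

lemma IsGCM.submatrix (hA : IsGCM A) {f : Fin m → Fin n} (hf : Injective f) :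
    IsGCM (A.submatrix f f) :=
  ⟨fun _ => hA.1 _, fun _ _ hij => hA.2.1 _ _ (hf.ne hij), fun _ _ h => hA.2.2 _ _ h⟩

lemma IsGCM.cast_diag (hA : IsGCM A) (i : Fin n) : (A i i : ℚ) = 2 := by
  exact_mod_cast hA.1 i

lemma IsGCM.cast_nonpos (hA : IsGCM A) {i j : Fin n} (hij : i ≠ j) : (A i j : ℚ) ≤ 0 := by
  exact_mod_cast hA.2.1 i j hij

lemma IsGCM.cast_neg_of_adj (hA : IsGCM A) {i j : Fin n} (hij : (gcmGraph A).Adj i j) :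
    (A i j : ℚ) < 0 := by
  have hne : A i j ≠ 0 := hij.2.elim id fun h h' => h (hA.2.2 _ _ h')
  exact_mod_cast (hA.2.1 i j hij.1).lt_of_ne hne

lemma sum_eq_sum_comp_add_sum_compl (A : Matrix (Fin n) (Fin n) ℤ) {f : Fin m → Fin n}
    (hf : Injective f) (u : Fin n → ℚ) (i : Fin n) :
    ∑ j, (A i j : ℚ) * u j =
      ∑ j, (A i (f j) : ℚ) * u (f j) + ∑ j ∈ (univ.map ⟨f, hf⟩)ᶜ, (A i j : ℚ) * u j := by
  rw [← sum_add_sum_compl (univ.map ⟨f, hf⟩), sum_map]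
  rfl

lemma IsGCM.mul_nonpos_of_notMem_range (hA : IsGCM A) {f : Fin m → Fin n} (hf : Injective f)
    {u : Fin n → ℚ} (hu : ∀ j, 0 ≤ u j) (i : Fin m) {j : Fin n} (hj : j ∈ (univ.map ⟨f, hf⟩)ᶜ) :
    (A (f i) j : ℚ) * u j ≤ 0 := by
  have hne : f i ≠ j := by rintro rfl; simp at hj
  exact mul_nonpos_of_nonpos_of_nonneg (hA.cast_nonpos hne) (hu j)

lemma IsGCM.sum_le_sum_submatrix (hA : IsGCM A) {f : Fin m → Fin n} (hf : Injective f)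
    {u : Fin n → ℚ} (hu : ∀ j, 0 ≤ u j) (i : Fin m) :
    ∑ j, (A (f i) j : ℚ) * u j ≤ ∑ j, (A.submatrix f f i j : ℚ) * u (f j) := by
  rw [sum_eq_sum_comp_add_sum_compl A hf]
  exact add_le_of_nonpos_right (sum_nonpos fun j => hA.mul_nonpos_of_notMem_range hf hu i)

lemma IsGCM.sum_lt_sum_submatrix (hA : IsGCM A) {f : Fin m → Fin n} (hf : Injective f)
    {u : Fin n → ℚ} (hu : ∀ j, 0 < u j) {i : Fin m} {y : Fin n} (hy : y ∉ Set.range f)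
    (hiy : (gcmGraph A).Adj (f i) y) :
    ∑ j, (A (f i) j : ℚ) * u j < ∑ j, (A.submatrix f f i j : ℚ) * u (f j) := by
  rw [sum_eq_sum_comp_add_sum_compl A hf]
  refine add_lt_of_neg_right _ (sum_neg' (fun j => hA.mul_nonpos_of_notMem_range hf
    (fun j => (hu j).le) i) ⟨y, by simpa using hy, ?_⟩)
  exact mul_neg_of_neg_of_pos (hA.cast_neg_of_adj hiy) (hu y)

end RowSums

section Types

variable {A : Matrix (Fin n) (Fin n) ℤ} {f : Fin m → Fin n}

lemma IsFinType.submatrix (hA : IsFinType A) (hf : Injective f)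
    (hB : IsIndecomposable (A.submatrix f f)) : IsFinType (A.submatrix f f) := by
  obtain ⟨hA, -, u, hu, hAu⟩ := hA
  exact ⟨hA.submatrix hf, hB, u ∘ f, fun i => hu (f i),
    fun i => (hAu (f i)).trans_le (hA.sum_le_sum_submatrix hf (fun j => (hu j).le) i)⟩

lemma IsGCM.exists_zeros_ssubset {D : Matrix (Fin n) (Fin n) ℤ} (hD : IsGCM D)
    {v : Fin n → ℚ} (hv : ∀ i, 0 < v i) (h0 : ∀ i, 0 ≤ ∑ j, (D i j : ℚ) * v j) {x y : Fin n}
    (hx : ∑ j, (D x j : ℚ) * v j = 0) (hy : 0 < ∑ j, (D y j : ℚ) * v j)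
    (hxy : (gcmGraph D).Adj x y) :
    ∃ w : Fin n → ℚ, (∀ i, 0 < w i) ∧ (∀ i, 0 ≤ ∑ j, (D i j : ℚ) * w j) ∧
      0 < ∑ j, (D y j : ℚ) * w j ∧
      {i | ∑ j, (D i j : ℚ) * w j = 0}.toFinset ⊂ {i | ∑ j, (D i j : ℚ) * v j = 0}.toFinset := by
  set ε := min (v y / 2) ((∑ j, (D y j : ℚ) * v j) / 4)
  have hε : 0 < ε := lt_min (by linarith [hv y]) (by linarith)
  set w := v - Pi.single y ε
  have hrow : ∀ i, ∑ j, (D i j : ℚ) * w j = ∑ j, (D i j : ℚ) * v j - D i y * ε := by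
    intro i
    simp [w, mul_sub, sum_sub_distrib, Pi.single_apply]
  have hle : ∀ i, i ≠ y → ∑ j, (D i j : ℚ) * v j ≤ ∑ j, (D i j : ℚ) * w j := fun i hi => by
    rw [hrow]
    nlinarith [hD.cast_nonpos hi]
  have hwy : 0 < ∑ j, (D y j : ℚ) * w j := by
    rw [hrow, hD.cast_diag]
    linarith [min_le_right (v y / 2) ((∑ j, (D y j : ℚ) * v j) / 4)]
  refine ⟨w, fun i => ?_, fun i => ?_, hwy, ?_⟩
  · obtain rfl | hi := eq_or_ne i y
    · simp only [w, Pi.sub_apply, Pi.single_eq_same]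
      linarith [min_le_left (v i / 2) ((∑ j, (D i j : ℚ) * v j) / 4), hv i]
    · simpa [w, hi] using hv i
  · obtain rfl | hi := eq_or_ne i y
    exacts [hwy.le, (h0 i).trans (hle i hi)]
  · refine ssubset_iff_of_subset (fun i hi => ?_) |>.2 ⟨x, ?_, ?_⟩
    · simp only [Set.mem_toFinset, Set.mem_ofPred_eq] at hi ⊢
      have hiy : i ≠ y := by rintro rfl; exact hwy.ne' hi
      exact le_antisymm (hi ▸ hle i hiy) (h0 i)
    · simpa using hx
    · simp only [Set.mem_toFinset, Set.mem_ofPred_eq, hrow, hx]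
      nlinarith [hD.cast_neg_of_adj hxy]

lemma IsGCM.isFinType_of_nonneg {D : Matrix (Fin n) (Fin n) ℤ} (hD : IsGCM D)
    (hconn : IsIndecomposable D) {v : Fin n → ℚ} (hv : ∀ i, 0 < v i)
    (h0 : ∀ i, 0 ≤ ∑ j, (D i j : ℚ) * v j) {y : Fin n} (hy : 0 < ∑ j, (D y j : ℚ) * v j) :
    IsFinType D := by
  induction hZ : {i | ∑ j, (D i j : ℚ) * v j = 0}.toFinset using Finset.strongInduction
    generalizing v y with
  | H Z ih =>
    by_cases hpos : ∀ i, 0 < ∑ j, (D i j : ℚ) * v j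
    · exact ⟨hD, hconn, v, hv, hpos⟩
    push Not at hpos
    obtain ⟨z, hz⟩ := hpos
    obtain ⟨x, hx, y', hy', hxy⟩ := hconn.exists_adj_of_mem_of_notMem
      (S := {i | ∑ j, (D i j : ℚ) * v j = 0}) (le_antisymm hz (h0 z)) hy.ne'
    obtain ⟨w, hw, hw0, hwy, hsub⟩ :=
      hD.exists_zeros_ssubset hv h0 hx ((h0 y').lt_of_ne' hy') hxy
    exact ih _ (hZ ▸ hsub) hw hw0 hwy rfl

lemma IsAffType.isFinType_submatrix (hA : IsAffType A) (hf : Injective f) (hmn : m < n)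
    (hB : IsIndecomposable (A.submatrix f f)) : IsFinType (A.submatrix f f) := by
  obtain ⟨hA, hAconn, u, hu, hAu⟩ := hA
  obtain ⟨i₀⟩ := hB.nonempty
  obtain ⟨b, hb⟩ := exists_notMem_range_of_lt f hmn
  obtain ⟨_, ⟨i, rfl⟩, y, hy, hiy⟩ :=
    hAconn.exists_adj_of_mem_of_notMem (Set.mem_range_self i₀) hb
  refine (hA.submatrix hf).isFinType_of_nonneg hB (v := u ∘ f) (fun j => hu (f j))
    (fun j => ?_) (y := i) ?_
  · exact (hAu (f j)).symm.trans_le (hA.sum_le_sum_submatrix hf (fun j => (hu j).le) j)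
  · exact (hAu (f i)).symm.trans_lt (hA.sum_lt_sum_submatrix hf hu hy hiy)

end Types

section Graphs

variable {A : Matrix (Fin n) (Fin n) ℤ} {f : Fin m → Fin n}

def gcmGraphSubmatrixEmbedding (A : Matrix (Fin n) (Fin n) ℤ) (hf : Injective f) :
    gcmGraph (A.submatrix f f) ↪g gcmGraph A where
  toFun := f
  inj' := hf
  map_rel_iff' := and_congr_left' hf.ne_iff

lemma isIndecomposable_submatrix_iff (hf : Injective f) :
    IsIndecomposable (A.submatrix f f) ↔ ((gcmGraph A).induce (Set.range f)).Connected :=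
  (gcmGraphSubmatrixEmbedding A hf).isoInduceRange.connected_iff

end Graphs

lemma IsPrincipalSubmatrix.le {B : Matrix (Fin m) (Fin m) ℤ} {A : Matrix (Fin n) (Fin n) ℤ}
    (h : IsPrincipalSubmatrix B A) : m ≤ n := by
  obtain ⟨f, hf, -⟩ := h
  simpa using Fintype.card_le_of_injective f hf.injective

lemma IsPrincipalSubmatrix.eq {B A : Matrix (Fin n) (Fin n) ℤ}
    (h : IsPrincipalSubmatrix B A) : B = A := by
  obtain ⟨f, hf, rfl⟩ := h
  rw [hf.eq_id]
  rfl

lemma Finset.exists_strictMono_orderEmbOfFin_comp {α : Type*} [LinearOrder α] {t : Finset α}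
    {p : ℕ} (ht : t.card = p) {f : Fin m → α} (hf : StrictMono f) (hft : ∀ i, f i ∈ t) :
    ∃ g : Fin m → Fin p, StrictMono g ∧ t.orderEmbOfFin ht ∘ g = f := by
  refine ⟨fun i => (t.orderIsoOfFin ht).symm ⟨f i, hft i⟩,
    fun i j hij => (t.orderIsoOfFin ht).symm.strictMono (Subtype.mk_lt_mk.mpr (hf hij)), ?_⟩
  ext i
  rw [comp_apply, ← coe_orderIsoOfFin_apply, OrderIso.apply_symm_apply]

lemma IsIndecomposable.exists_isProperPrincipalSubmatrix_succ {A : Matrix (Fin n) (Fin n) ℤ}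
    (hA : IsIndecomposable A) {B : Matrix (Fin m) (Fin m) ℤ} (hBA : IsPrincipalSubmatrix B A)
    (hB : IsIndecomposable B) (hmn : m < n) :
    ∃ C : Matrix (Fin (m + 1)) (Fin (m + 1)) ℤ, IsPrincipalSubmatrix C A ∧
      IsIndecomposable C ∧ IsProperPrincipalSubmatrix B C := by
  obtain ⟨f, hf, rfl⟩ := hBA
  obtain ⟨i₀⟩ := hB.nonempty
  obtain ⟨b, hb⟩ := exists_notMem_range_of_lt f hmn
  obtain ⟨_, ⟨i, rfl⟩, v, hv, hiv⟩ := hA.exists_adj_of_mem_of_notMem (Set.mem_range_self i₀) hb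
  set t := insert v (univ.image f)
  have ht : t.card = m + 1 := by
    rw [card_insert_of_notMem (by simpa using hv), card_image_of_injective _ hf.injective,
      card_fin]
  set F := t.orderEmbOfFin ht
  have hFt : Set.range F = insert v (Set.range f) := by
    rw [range_orderEmbOfFin, coe_insert, coe_image, coe_univ, Set.image_univ]
  obtain ⟨g, hg, hFg⟩ := exists_strictMono_orderEmbOfFin_comp ht hf
    (fun j => mem_insert_of_mem (mem_image_of_mem f (mem_univ j)))
  refine ⟨A.submatrix F F, ⟨F, F.strictMono, rfl⟩, ?_, ⟨g, hg, ?_⟩, hB.nonempty.some.pos, by omega⟩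
  · rw [isIndecomposable_submatrix_iff F.injective, hFt]
    exact ((isIndecomposable_submatrix_iff hf.injective).1 hB).induce_insert
      (Set.mem_range_self i) hiv
  · rw [Matrix.submatrix_submatrix, hFg]

lemma IsNType.isIndecomposable {k : ℕ} {A : Matrix (Fin n) (Fin n) ℤ} (h : IsNType k A) :
    IsIndecomposable A := by
  match k with
  | 0 | 1 | 2 => rw [IsNType] at h; exact h.2.1
  | _ + 3 => rw [IsNType] at h; exact h.2.1

lemma IsNType.exists_isNType_lt_of_isProperPrincipalSubmatrix {j : ℕ}
    {C : Matrix (Fin n) (Fin n) ℤ} (hC : IsNType j C) {B : Matrix (Fin m) (Fin m) ℤ}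
    (hBC : IsProperPrincipalSubmatrix B C) (hB : IsIndecomposable B) :
    ∃ j', IsNType j' B ∧ (j' = 0 ∨ j' < j) := by
  match j with
  | 0 =>
    rw [IsNType] at hC
    obtain ⟨⟨f, hf, rfl⟩, -⟩ := hBC
    exact ⟨0, by rw [IsNType]; exact hC.submatrix hf.injective hB, Or.inl rfl⟩
  | 1 =>
    rw [IsNType] at hC
    obtain ⟨⟨f, hf, rfl⟩, -, hmn⟩ := hBC
    exact ⟨0, by rw [IsNType]; exact hC.isFinType_submatrix hf.injective hmn hB, Or.inl rfl⟩
  | 2 =>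
    rw [IsNType] at hC
    rcases hC.2.2.2.2 m _ hBC hB with h | h
    · exact ⟨0, by rw [IsNType]; exact h, Or.inl rfl⟩
    · exact ⟨1, by rw [IsNType]; exact h, by omega⟩
  | _ + 3 =>
    rw [IsNType] at hC
    obtain ⟨j', hj', h⟩ := hC.2.2.2 m _ hBC hB
    exact ⟨j', h, Or.inr hj'⟩

lemma IsNType.exists_isNType_of_isPrincipalSubmatrix {k : ℕ} {A : Matrix (Fin n) (Fin n) ℤ}
    (hA : IsNType k A) {B : Matrix (Fin m) (Fin m) ℤ} (hBA : IsPrincipalSubmatrix B A)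
    (hB : IsIndecomposable B) : ∃ j, IsNType j B ∧ (j = 0 ∨ j + (n - m) ≤ k) := by
  induction hd : n - m generalizing m with
  | zero =>
    obtain rfl : m = n := by have := hBA.le; omega
    exact ⟨k, hBA.eq ▸ hA, by omega⟩
  | succ d ih =>
    obtain ⟨C, hCA, hC, hBC⟩ :=
      hA.isIndecomposable.exists_isProperPrincipalSubmatrix_succ hBA hB (by omega)
    obtain ⟨j, hCj, hj⟩ := ih hCA hC (by omega)
    obtain ⟨j', hBj', hj'⟩ := hCj.exists_isNType_lt_of_isProperPrincipalSubmatrix hBC hB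
    exact ⟨j', hBj', by omega⟩

theorem small_submatrices_finite_of_isNType_general {k a : ℕ}
    {A : Matrix (Fin (k + a)) (Fin (k + a)) ℤ} (hN : IsNType k A) :
    (∀ m, m < a + 1 → ∀ B : Matrix (Fin m) (Fin m) ℤ,
      IsPrincipalSubmatrix B A → IsIndecomposable B → IsFinType B) ∧
    (∀ m, ∀ B : Matrix (Fin m) (Fin m) ℤ,
      IsPrincipalSubmatrix B A → IsHypType B → a + 2 ≤ m) := by
  refine ⟨fun m hm B hBA hB => ?_, fun m B hBA hB => ?_⟩
  · obtain ⟨j, hBj, hj⟩ := hN.exists_isNType_of_isPrincipalSubmatrix hBA hB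
    obtain rfl : j = 0 := by omega
    rwa [IsNType] at hBj
  · obtain ⟨j, hBj, hj⟩ := hN.exists_isNType_of_isPrincipalSubmatrix hBA hB.2.1
    have hfin : j ≠ 0 := by rintro rfl; rw [IsNType] at hBj; exact hB.2.2.1 hBj
    have haff : j ≠ 1 := by rintro rfl; rw [IsNType] at hBj; exact hB.2.2.2.1 hBj
    have := hBA.le
    omega

/-- Corollary 3.2 of the paper: for a GCM of type `N_{k,k+a}`
with `k ≥ 2` and `a ≥ 1`, every (connected) principal submatrix of dimension
smaller than `a + 1` is of finite type, and every principal submatrix of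
hyperbolic (`N₂`) type has dimension at least `a + 2`. -/
theorem small_submatrices_finite_of_isNType {k a : ℕ} (hk : 2 ≤ k) (ha : 1 ≤ a)
    {A : Matrix (Fin (k + a)) (Fin (k + a)) ℤ} (hA : IsGCM A) (hN : IsNType k A) :
    (∀ m, m < a + 1 → ∀ B : Matrix (Fin m) (Fin m) ℤ,
      IsPrincipalSubmatrix B A → IsIndecomposable B → IsFinType B) ∧
    (∀ m, ∀ B : Matrix (Fin m) (Fin m) ℤ,
      IsPrincipalSubmatrix B A → IsHypType B → a + 2 ≤ m) :=
  small_submatrices_finite_of_isNType_general hN
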